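/- arXiv:1910.09500 — 2 statements merged into one kernel-verified Lean document; each statement's English description precedes it below -/
import Mathlib

section
/- Let λ : ℤ₊ → ℝ satisfy (UB). The contour-integral kernel is the transition function of the pure-birth chain: for all x,y ∈ ℤ₊ one has e^{0·L}(x,y) = 1(x = y), the map t ↦ e^{tL}(x,y) is differentiable on [0,∞), and for all t ≥ 0 it satisfies the Kolmogorov backward equation (d/dt) e^{tL}(x,y) = λ(x) ( e^{tL}(x+1,y) − e^{tL}(x,y) ). -/
/-!
On the circle `|w| = R`, which encloses every `λ(k)`, the cancellations in `ψ_y p_x` leave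
`∏_{x ≤ k ≤ y} λ(k)/(λ(k) - w)` when `x ≤ y` and a polynomial when `x > y`. For `x = y`
this is a single simple pole with residue `-λ(y)`; for `x < y` it is `O(|w|⁻²)` at infinity,
so the contour can be pushed to infinity; for `x > y` Cauchy's theorem applies. Hence
`e^{0·L}(x,y) = 1(x = y)`. Differentiating under the integral sign brings down a factor `-w`,
and `λ(x) (p_{x+1} - p_x) = -w p_x` turns it into the backward equation.
-/

open Complex MeasureTheory Finset
open scoped Real ComplexOrder

/-- ψ_x(w) = ∏_{k=0}^{x} λ(k)/(λ(k)−w). -/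
noncomputable def psiF (lam : ℕ → ℝ) (x : ℕ) (w : ℂ) : ℂ :=
  ∏ k ∈ Finset.range (x + 1), (lam k : ℂ) / ((lam k : ℂ) - w)

/-- p_x(w) = ∏_{k=0}^{x−1} (λ(k)−w)/λ(k). -/
noncomputable def pF (lam : ℕ → ℝ) (x : ℕ) (w : ℂ) : ℂ :=
  ∏ k ∈ Finset.range x, (((lam k : ℂ) - w) / (lam k : ℂ))

/-- e^{tL}(x,y) := −(1/λ(y))·(1/(2πi)) ∮_{|w|=R} ψ_y(w) p_x(w) e^{−tw} dw,
the contour being the counterclockwise circle of radius R centred at 0. -/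
noncomputable def eL (lam : ℕ → ℝ) (R t : ℝ) (x y : ℕ) : ℂ :=
  -(1 / (lam y : ℂ)) * ((2 * (Real.pi : ℂ) * Complex.I)⁻¹ *
    ∮ w in C(0, R), psiF lam y w * pF lam x w * Complex.exp (-(t : ℂ) * w))

open Metric Filter Topology Bornology

theorem circleIntegral_eq_zero_of_tendsto_mul_cobounded {f : ℂ → ℂ} {R : ℝ} (hR : 0 < R)
    (hf : ∀ w, R ≤ ‖w‖ → DifferentiableAt ℂ f w)
    (hlim : Tendsto (fun w => w * f w) (cobounded ℂ) (𝓝 0)) :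
    ∮ w in C(0, R), f w = 0 := by
  have hradius (u : ℝ) (hu : R ≤ u) : ∮ w in C(0, u), f w = ∮ w in C(0, R), f w :=
    circleIntegral_eq_of_differentiable_on_annulus_off_countable hR hu Set.countable_empty
      (fun w hw => (hf w (by simpa using hw.2)).continuousAt.continuousWithinAt)
      (fun w hw => hf w (le_of_lt (by simpa using hw.1.2)))
  refine norm_le_zero_iff.1 (le_of_forall_pos_le_add fun ε hε => ?_)
  obtain ⟨r, -, hr⟩ := hasBasis_cobounded_norm.eventually_iff.1
    (hlim.eventually (closedBall_mem_nhds 0 (div_pos hε Real.two_pi_pos)))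
  set u := max R r
  have hu : 0 < u := hR.trans_le (le_max_left _ _)
  have hbound : ∀ w ∈ sphere (0 : ℂ) u, ‖f w‖ ≤ ε / (2 * π) / u := by
    intro w hw
    rw [mem_sphere_zero_iff_norm] at hw
    have hsmall := hr (hw ▸ le_max_right R r : r ≤ ‖w‖)
    rw [dist_zero_right, norm_mul, hw] at hsmall
    rwa [le_div_iff₀ hu, mul_comm]
  calc ‖∮ w in C(0, R), f w‖ = ‖∮ w in C(0, u), f w‖ := by rw [hradius u (le_max_left _ _)]
    _ ≤ 2 * π * u * (ε / (2 * π) / u) :=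
      circleIntegral.norm_integral_le_of_norm_le_const hu.le hbound
    _ = 0 + ε := by field_simp; ring

theorem tendsto_div_sub_cobounded (a : ℂ) :
    Tendsto (fun w => a / (a - w)) (cobounded ℂ) (𝓝 0) := by
  simpa [div_eq_mul_inv] using
    (tendsto_inv₀_cobounded.comp (tendsto_const_sub_cobounded a)).const_mul a

theorem tendsto_mul_div_sub_cobounded (a : ℂ) :
    Tendsto (fun w => w * (a / (a - w))) (cobounded ℂ) (𝓝 (-a)) := by
  have : Tendsto (fun w => a * (a / (a - w)) - a) (cobounded ℂ) (𝓝 (a * 0 - a)) :=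
    ((tendsto_div_sub_cobounded a).const_mul a).sub_const a
  rw [mul_zero, zero_sub] at this
  refine this.congr' ?_
  filter_upwards [eventually_ne_cobounded a] with w hw
  have := sub_ne_zero.2 hw.symm
  field_simp
  ring

theorem tendsto_mul_prod_div_sub_cobounded {ι : Type*} {S : Finset ι} (hS : 2 ≤ #S)
    (a : ι → ℂ) :
    Tendsto (fun w => w * ∏ k ∈ S, a k / (a k - w)) (cobounded ℂ) (𝓝 0) := by
  classical
  obtain ⟨i, hi⟩ : S.Nonempty := card_pos.1 (by omega)
  obtain ⟨j, hj⟩ : (S.erase i).Nonempty := card_pos.1 (by rw [card_erase_of_mem hi]; omega)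
  have hlim := (tendsto_mul_div_sub_cobounded (a i)).mul ((tendsto_div_sub_cobounded (a j)).mul
    (tendsto_finsetProd ((S.erase i).erase j) fun k _ => tendsto_div_sub_cobounded (a k)))
  rw [zero_mul, mul_zero] at hlim
  refine hlim.congr fun w => ?_
  rw [mul_prod_erase _ (fun k => a k / (a k - w)) hj, mul_assoc,
    mul_prod_erase _ (fun k => a k / (a k - w)) hi]

theorem hasDerivAt_circleIntegral_mul_cexp {g : ℂ → ℂ} {c : ℂ} {R : ℝ}
    (hg : ContinuousOn g (sphere c |R|)) (t : ℝ) :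
    HasDerivAt (fun τ : ℝ => ∮ w in C(c, R), g w * exp (-τ * w))
      (∮ w in C(c, R), g w * (-w * exp (-t * w))) t := by
  simp only [circleIntegral, deriv_circleMap]
  set G : ℝ → ℂ := fun θ => g (circleMap c R θ)
  have hG : Continuous G :=
    hg.comp_continuous (continuous_circleMap c R) (circleMap_mem_sphere' c R)
  set F : ℝ → ℝ → ℂ := fun τ θ =>
    (circleMap 0 R θ * I) • (G θ * exp (-τ * circleMap c R θ))
  set F' : ℝ → ℝ → ℂ := fun τ θ =>
    (circleMap 0 R θ * I) • (G θ * (-circleMap c R θ * exp (-τ * circleMap c R θ)))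
  have hF' : Continuous (Function.uncurry F') := by
    simp only [F', Function.uncurry_def]
    fun_prop
  obtain ⟨C, hC⟩ := ((isCompact_closedBall t 1).prod
    (isCompact_uIcc (a := 0) (b := 2 * π))).exists_bound_of_continuousOn hF'.continuousOn
  refine (intervalIntegral.hasDerivAt_integral_of_dominated_loc_of_deriv_le (μ := volume)
    (F := F) (F' := F') (bound := fun _ => C) (ball_mem_nhds t one_pos)
    ?_ ?_ ?_ ?_ intervalIntegrable_const ?_).2
  · exact .of_forall fun τ => (by fun_prop : Continuous (F τ)).aestronglyMeasurable
  · exact (by fun_prop : Continuous (F t)).intervalIntegrable _ _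
  · exact (hF'.comp (Continuous.prodMk_right t)).aestronglyMeasurable
  · exact .of_forall fun θ hθ τ hτ =>
      hC (τ, θ) ⟨ball_subset_closedBall hτ, Set.uIoc_subset_uIcc hθ⟩
  · refine .of_forall fun θ _ τ _ => ?_
    have hexp : HasDerivAt (fun τ : ℝ => exp (-τ * circleMap c R θ))
        (-circleMap c R θ * exp (-τ * circleMap c R θ)) τ := by
      simpa [mul_comm] using
        ((hasDerivAt_id (τ : ℂ)).neg.mul_const (circleMap c R θ)).cexp.comp_ofReal
    exact (hexp.const_mul (G θ)).const_smul (circleMap 0 R θ * I)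

section BirthChain

variable {lam : ℕ → ℝ}

theorem pF_succ (x : ℕ) (w : ℂ) : pF lam (x + 1) w = pF lam x w * ((lam x - w) / lam x) :=
  prod_range_succ _ _

theorem lam_mul_pF_succ_sub_pF {x : ℕ} (hx : lam x ≠ 0) (w : ℂ) :
    lam x * (pF lam (x + 1) w - pF lam x w) = -w * pF lam x w := by
  rw [pF_succ]
  field_simp
  ring

theorem differentiable_pF (x : ℕ) : Differentiable ℂ (pF lam x) := by
  unfold pF
  fun_prop

theorem differentiableAt_psiF (y : ℕ) {w : ℂ} (hw : ∀ k, (lam k : ℂ) ≠ w) :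
    DifferentiableAt ℂ (psiF lam y) w := by
  unfold psiF
  fun_prop (disch := exact sub_ne_zero.2 (hw _))

theorem prod_div_sub_mul_pF (hne : ∀ k, lam k ≠ 0) {w : ℂ} (hw : ∀ k, (lam k : ℂ) ≠ w)
    (n : ℕ) :
    (∏ k ∈ range n, (lam k : ℂ) / (lam k - w)) * pF lam n w = 1 := by
  rw [pF, ← prod_mul_distrib]
  refine prod_eq_one fun k _ => ?_
  have := sub_ne_zero.2 (hw k)
  have : (lam k : ℂ) ≠ 0 := ofReal_ne_zero.2 (hne k)
  field_simp

theorem psiF_mul_pF_of_le (hne : ∀ k, lam k ≠ 0) {w : ℂ} (hw : ∀ k, (lam k : ℂ) ≠ w)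
    {x y : ℕ} (hxy : x ≤ y + 1) :
    psiF lam y w * pF lam x w = ∏ k ∈ Ico x (y + 1), (lam k : ℂ) / (lam k - w) := by
  rw [psiF, ← prod_range_mul_prod_Ico _ hxy, mul_right_comm, prod_div_sub_mul_pF hne hw,
    one_mul]

theorem psiF_mul_pF_of_ge (hne : ∀ k, lam k ≠ 0) {w : ℂ} (hw : ∀ k, (lam k : ℂ) ≠ w)
    {x y : ℕ} (hxy : y + 1 ≤ x) :
    psiF lam y w * pF lam x w = ∏ k ∈ Ico (y + 1) x, ((lam k : ℂ) - w) / lam k := by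
  rw [pF, ← prod_range_mul_prod_Ico _ hxy, ← mul_assoc, psiF, ← pF,
    prod_div_sub_mul_pF hne hw, one_mul]

theorem lam_ne_of_le_norm {R : ℝ} (hlt : ∀ k, |lam k| < R) {w : ℂ} (hw : R ≤ ‖w‖) (k : ℕ) :
    (lam k : ℂ) ≠ w := by
  rintro rfl
  rw [norm_real, Real.norm_eq_abs] at hw
  exact (hlt k).not_ge hw

theorem circleIntegral_psiF_mul_pF {R : ℝ} (hne : ∀ k, lam k ≠ 0) (hlt : ∀ k, |lam k| < R)
    (x y : ℕ) :
    ∮ w in C(0, R), psiF lam y w * pF lam x w = if x = y then -(2 * π * I * lam y) else 0 := by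
  have hR : 0 < R := (abs_nonneg _).trans_lt (hlt 0)
  have hsphere (w : ℂ) (hw : w ∈ sphere 0 R) : ∀ k, (lam k : ℂ) ≠ w :=
    lam_ne_of_le_norm hlt (mem_sphere_zero_iff_norm.1 hw).ge
  rcases lt_trichotomy x y with hxy | rfl | hxy
  · rw [if_neg hxy.ne]
    refine circleIntegral_eq_zero_of_tendsto_mul_cobounded hR
      (fun w hw => (differentiableAt_psiF y (lam_ne_of_le_norm hlt hw)).mul
        (differentiable_pF x w)) ?_
    refine (tendsto_mul_prod_div_sub_cobounded (S := Ico x (y + 1)) (by simp; omega)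
      (fun k => (lam k : ℂ))).congr' ?_
    filter_upwards [eventually_cobounded_le_norm R] with w hw
    rw [psiF_mul_pF_of_le hne (lam_ne_of_le_norm hlt hw) (by omega)]
  · have hball : (lam x : ℂ) ∈ ball 0 R := by simpa using hlt x
    rw [if_pos rfl, circleIntegral.integral_congr hR.le (g := fun w => -lam x * (w - lam x)⁻¹),
      circleIntegral.integral_const_mul, circleIntegral.integral_sub_inv_of_mem_ball hball]
    · ring
    intro w hw
    dsimp only
    rw [psiF_mul_pF_of_le hne (hsphere w hw) le_self_add, Nat.Ico_succ_singleton, prod_singleton,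
      ← neg_sub, div_neg, div_eq_mul_inv, neg_mul]
  · rw [if_neg hxy.ne', circleIntegral.integral_congr hR.le
      fun w hw => psiF_mul_pF_of_ge hne (hsphere w hw) hxy]
    exact circleIntegral_eq_zero_of_differentiable_on_off_countable hR.le Set.countable_empty
      (by fun_prop : Continuous _).continuousOn (fun w _ => by fun_prop)

end BirthChain

section Kernel

variable {lam : ℕ → ℝ} {R : ℝ}

theorem eL_zero (hne : ∀ k, lam k ≠ 0) (hlt : ∀ k, |lam k| < R) (x y : ℕ) :
    eL lam R 0 x y = if x = y then 1 else 0 := by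
  simp only [eL, ofReal_zero, neg_zero, zero_mul, exp_zero, mul_one,
    circleIntegral_psiF_mul_pF hne hlt]
  split_ifs with h
  · have : (lam y : ℂ) ≠ 0 := ofReal_ne_zero.2 (hne y)
    field_simp
  · simp

theorem hasDerivAt_eL (hne : ∀ k, lam k ≠ 0) (hlt : ∀ k, |lam k| < R) (t : ℝ) (x y : ℕ) :
    HasDerivAt (fun τ : ℝ => eL lam R τ x y)
      (lam x * (eL lam R t (x + 1) y - eL lam R t x y)) t := by
  have hcont (z : ℕ) : ContinuousOn (fun w => psiF lam y w * pF lam z w) (sphere 0 |R|) :=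
    fun w hw => ((differentiableAt_psiF y (lam_ne_of_le_norm hlt
      ((le_abs_self R).trans (mem_sphere_zero_iff_norm.1 hw).ge))).mul
      (differentiable_pF z w)).continuousAt.continuousWithinAt
  have hint (z : ℕ) :
      CircleIntegrable (fun w => psiF lam y w * pF lam z w * exp (-t * w)) 0 R :=
    ((hcont z).mul (by fun_prop : Continuous fun w : ℂ => exp (-t * w)).continuousOn
      ).circleIntegrable'
  have hbackward : ∮ w in C(0, R), psiF lam y w * pF lam x w * (-w * exp (-t * w)) =
      lam x * ((∮ w in C(0, R), psiF lam y w * pF lam (x + 1) w * exp (-t * w)) -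
        ∮ w in C(0, R), psiF lam y w * pF lam x w * exp (-t * w)) := by
    rw [← circleIntegral.integral_sub (hint _) (hint _), ← circleIntegral.integral_const_mul]
    congr 1 with w
    linear_combination (-psiF lam y w * exp (-t * w)) * lam_mul_pF_succ_sub_pF (hne x) w
  refine (((hasDerivAt_circleIntegral_mul_cexp (hcont x) t).const_mul
    (2 * π * I)⁻¹).const_mul (-(1 / (lam y : ℂ)))).congr_deriv ?_
  rw [hbackward, eL, eL]
  ring

end Kernel

/-- e^{0·L}(x,y) = 1(x=y), t ↦ e^{tL}(x,y) is differentiable on [0,∞) and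
satisfies the Kolmogorov backward equation
(d/dt) e^{tL}(x,y) = λ(x) (e^{tL}(x+1,y) − e^{tL}(x,y)). -/
theorem stmt_2 (lam : ℕ → ℝ) (s M : ℝ) (hs : 0 < s)
    (hlb : ∀ x, s ≤ lam x) (hub : ∀ x, lam x ≤ M)
    (R : ℝ) (hR : M < R) (x y : ℕ) :
    (eL lam R 0 x y = if x = y then 1 else 0) ∧
    ∀ t : ℝ, 0 ≤ t →
      HasDerivWithinAt (fun τ : ℝ => eL lam R τ x y)
        ((lam x : ℂ) * (eL lam R t (x + 1) y - eL lam R t x y)) (Set.Ici 0) t := by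
  have hpos (k : ℕ) : 0 < lam k := hs.trans_le (hlb k)
  have hne (k : ℕ) : lam k ≠ 0 := (hpos k).ne'
  have hlt (k : ℕ) : |lam k| < R := by
    rw [abs_of_pos (hpos k)]
    exact (hub k).trans_lt hR
  exact ⟨eL_zero hne hlt x y, fun t _ => (hasDerivAt_eL hne hlt t x y).hasDerivWithinAt⟩
end

section
/- Let λ : ℤ₊ → ℝ satisfy (UB). For every t ≥ 0, y ∈ ℤ₊ and every integer l: Σ_{x ∈ ℤ₊, x > y} λ(x)^{−1} · (1/(2πi)) ∮_{C_λ} ψ_x(w) w^l e^{−tw} dw = −(1/(2πi)) ∮_{C_λ} ψ_y(w) w^{l−1} e^{−tw} dw, the series on the left converging absolutely. (Equivalently, with φ(y,x) := −λ(y)^{−1} 1(x > y) and Ψ^n_{n−j}(x) := −(1/λ(x))·(1/(2πi)) ∮_{C_λ} ψ_x(w) w^{n−j} e^{−tw} dw, one has φ * Ψ^n_{n−j} = Ψ^{n−1}_{n−1−j}.) -/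
open Complex MeasureTheory Finset
open scoped Real ComplexOrder

/-!
Since `ψ_{x+1}(w) = ψ_x(w) · λ(x+1)/(λ(x+1) - w)`, on the contour
`λ(x+1)⁻¹ · w · ψ_{x+1}(w) = ψ_{x+1}(w) - ψ_x(w)`. Hence the terms of the series telescope,
and its partial sums are `I_{y+n} - I_y`, where `I_x` is the integral of `ψ_x(w) w^{l-1} e^{-tw}`.
By Cauchy's theorem the circle may be pushed out to radius `R + M`, where every factor
`λ(k)/(λ(k) - w)` of `ψ_x` has modulus at most `M/R < 1`; so these integrals decay geometrically
in `x`, which gives absolute convergence and `I_{y+n} → 0`.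
-/

open Filter Topology

theorem hasSum_subtype_gt_of_eq_sub {E : Type*} [AddCommGroup E] [TopologicalSpace E]
    [IsTopologicalAddGroup E] [T2Space E] {f g : ℕ → E} (y : ℕ)
    (hfg : ∀ n, y ≤ n → f (n + 1) = g (n + 1) - g n) (hf : Summable f)
    (hg : Tendsto g atTop (𝓝 0)) :
    HasSum (fun x : { x : ℕ // y < x } => f x) (-g y) := by
  have hshift : HasSum (fun n => f (n + (y + 1))) (-g y) := by
    rw [((summable_nat_add_iff (y + 1)).2 hf).hasSum_iff_tendsto_nat]
    have hpartial (n : ℕ) : ∑ i ∈ range n, f (i + (y + 1)) = g (n + y) - g y := by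
      convert Finset.sum_range_sub (fun i => g (i + y)) n using 2 with i
      · rw [← add_assoc, hfg _ (by omega), add_right_comm]
      · rw [zero_add]
    simp_rw [hpartial, ← zero_sub]
    exact (hg.comp (tendsto_add_atTop_nat y)).sub_const _
  refine (Function.Injective.hasSum_iff (g := fun n => (⟨n + (y + 1), by omega⟩ :
    { x : ℕ // y < x })) (fun m n h => by simpa using h) fun x hx => ?_).1 hshift
  exact absurd ⟨x.1 - (y + 1), Subtype.ext (by have := x.2; simp only; omega)⟩ hx

theorem circleIntegral_eq_of_differentiableOn_norm_gt {E : Type*} [NormedAddCommGroup E]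
    [NormedSpace ℂ E] [CompleteSpace E] {f : ℂ → E} {M r R : ℝ}
    (hf : DifferentiableOn ℂ f {z | M < ‖z‖}) (hr : 0 < r) (hMr : M < r) (hrR : r ≤ R) :
    (∮ z in C(0, R), f z) = ∮ z in C(0, r), f z := by
  have hopen : IsOpen {z : ℂ | M < ‖z‖} := isOpen_lt continuous_const continuous_norm
  have houtside : ∀ z ∉ Metric.ball (0 : ℂ) r, M < ‖z‖ := fun z hz => by
    rw [Metric.mem_ball, dist_zero_right, not_lt] at hz
    linarith
  refine circleIntegral_eq_of_differentiable_on_annulus_off_countable hr hrR Set.countable_empty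
    (hf.continuousOn.mono fun z hz => houtside z hz.2) fun z hz => ?_
  exact hf.differentiableAt
    (hopen.mem_nhds (houtside z fun h => hz.1.2 (Metric.ball_subset_closedBall h)))

section Psi

variable {lam : ℕ → ℝ} {M : ℝ}

theorem psiF_succ (lam : ℕ → ℝ) (x : ℕ) (w : ℂ) :
    psiF lam (x + 1) w = psiF lam x w * ((lam (x + 1) : ℂ) / ((lam (x + 1) : ℂ) - w)) :=
  Finset.prod_range_succ _ _

theorem sub_le_norm_ofReal_sub {a : ℝ} (ha : |a| ≤ M) (w : ℂ) :
    ‖w‖ - M ≤ ‖(a : ℂ) - w‖ := by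
  have := norm_sub_norm_le w (a : ℂ)
  rw [Complex.norm_real, Real.norm_eq_abs] at this
  rw [norm_sub_rev]
  linarith

theorem ofReal_sub_ne_zero {a : ℝ} {w : ℂ} (ha : |a| ≤ M) (hw : M < ‖w‖) :
    (a : ℂ) - w ≠ 0 :=
  norm_pos_iff.mp ((sub_pos.mpr hw).trans_le (sub_le_norm_ofReal_sub ha w))

theorem norm_div_sub_le {a : ℝ} {w : ℂ} (ha : |a| ≤ M) (hw : M < ‖w‖) :
    ‖(a : ℂ) / ((a : ℂ) - w)‖ ≤ M / (‖w‖ - M) := by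
  rw [norm_div, Complex.norm_real, Real.norm_eq_abs]
  exact div_le_div₀ ((abs_nonneg a).trans ha) ha (by linarith) (sub_le_norm_ofReal_sub ha w)

theorem norm_psiF_le (hlam : ∀ k, |lam k| ≤ M) (x : ℕ) {w : ℂ} (hw : M < ‖w‖) :
    ‖psiF lam x w‖ ≤ (M / (‖w‖ - M)) ^ (x + 1) := by
  rw [psiF, norm_prod]
  calc ∏ k ∈ range (x + 1), ‖(lam k : ℂ) / ((lam k : ℂ) - w)‖
      ≤ ∏ _k ∈ range (x + 1), M / (‖w‖ - M) :=
        Finset.prod_le_prod (fun _ _ => norm_nonneg _) fun k _ => norm_div_sub_le (hlam k) hw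
    _ = (M / (‖w‖ - M)) ^ (x + 1) := by rw [Finset.prod_const, Finset.card_range]

noncomputable def psiIntegrand (lam : ℕ → ℝ) (t : ℝ) (l : ℤ) (x : ℕ) (w : ℂ) : ℂ :=
  psiF lam x w * w ^ l * Complex.exp (-(t : ℂ) * w)

noncomputable def psiIntegral (lam : ℕ → ℝ) (R t : ℝ) (l : ℤ) (x : ℕ) : ℂ :=
  (2 * (Real.pi : ℂ) * Complex.I)⁻¹ * ∮ w in C(0, R), psiIntegrand lam t l x w

theorem differentiableOn_psiIntegrand (hlam : ∀ k, |lam k| ≤ M) (t : ℝ) (l : ℤ) (x : ℕ) :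
    DifferentiableOn ℂ (psiIntegrand lam t l x) {w | M < ‖w‖} := by
  intro w hw
  have hw0 : w ≠ 0 := by
    rintro rfl
    simp only [Set.mem_ofPred_eq, norm_zero] at hw
    linarith [(abs_nonneg _).trans (hlam 0)]
  have hpsi : DifferentiableAt ℂ (psiF lam x) w := by
    unfold psiF
    refine DifferentiableAt.fun_finsetProd fun k _ => (differentiableAt_const _).div
      ((differentiableAt_const _).sub differentiableAt_id) (ofReal_sub_ne_zero (hlam k) hw)
  exact ((hpsi.mul (differentiableAt_zpow.mpr (Or.inl hw0))).mul
    (differentiableAt_id.const_mul _).cexp).differentiableWithinAt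

theorem circleIntegrable_psiIntegrand (hlam : ∀ k, |lam k| ≤ M) {R : ℝ} (hR : M < R) (t : ℝ)
    (l : ℤ) (x : ℕ) : CircleIntegrable (psiIntegrand lam t l x) 0 R :=
  ((differentiableOn_psiIntegrand hlam t l x).continuousOn.mono fun w hw => by
    rwa [Set.mem_ofPred_eq, mem_sphere_zero_iff_norm.mp hw]).circleIntegrable
    (((abs_nonneg _).trans (hlam 0)).trans hR.le)

theorem norm_psiIntegrand_le (hlam : ∀ k, |lam k| ≤ M) (t : ℝ) (l : ℤ) (x : ℕ) {w : ℂ}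
    (hw : M < ‖w‖) :
    ‖psiIntegrand lam t l x w‖ ≤
      (M / (‖w‖ - M)) ^ (x + 1) * ‖w‖ ^ l * Real.exp (|t| * ‖w‖) := by
  have hexp : ‖Complex.exp (-(t : ℂ) * w)‖ ≤ Real.exp (|t| * ‖w‖) := by
    simpa [norm_mul] using Complex.norm_exp_le_exp_norm (-(t : ℂ) * w)
  rw [psiIntegrand, norm_mul, norm_mul, norm_zpow]
  have hM : 0 ≤ M := (abs_nonneg _).trans (hlam 0)
  gcongr
  exact norm_psiF_le hlam x hw

theorem norm_psiIntegral_le (hlam : ∀ k, |lam k| ≤ M) {R : ℝ} (hR : M < R) (t : ℝ) (l : ℤ)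
    (x : ℕ) :
    ‖psiIntegral lam R t l x‖ ≤
      R * ((M / (R - M)) ^ (x + 1) * R ^ l * Real.exp (|t| * R)) := by
  refine circleIntegral.norm_two_pi_i_inv_smul_integral_le_of_norm_le_const
    (((abs_nonneg _).trans (hlam 0)).trans hR.le) fun w hw => ?_
  rw [mem_sphere_zero_iff_norm] at hw
  have := norm_psiIntegrand_le hlam t l x (hw ▸ hR)
  rwa [hw] at this

theorem psiIntegral_eq_of_le (hlam : ∀ k, |lam k| ≤ M) {R R' : ℝ} (hR : M < R)
    (hRR' : R ≤ R') (t : ℝ) (l : ℤ) (x : ℕ) :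
    psiIntegral lam R' t l x = psiIntegral lam R t l x := by
  rw [psiIntegral, psiIntegral, circleIntegral_eq_of_differentiableOn_norm_gt
    (differentiableOn_psiIntegrand hlam t l x) (((abs_nonneg _).trans (hlam 0)).trans_lt hR)
    hR hRR']

theorem exists_norm_psiIntegral_le_geometric (hlam : ∀ k, |lam k| ≤ M) {R : ℝ} (hR : M < R)
    (t : ℝ) (l : ℤ) :
    ∃ C q : ℝ, 0 ≤ q ∧ q < 1 ∧ ∀ x, ‖psiIntegral lam R t l x‖ ≤ C * q ^ x := by
  have hM : 0 ≤ M := (abs_nonneg _).trans (hlam 0)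
  have hR' : M < R + M := by linarith
  refine ⟨(R + M) * (M / R * (R + M) ^ l * Real.exp (|t| * (R + M))), M / R,
    div_nonneg hM (by linarith), (div_lt_one (by linarith)).mpr hR, fun x => ?_⟩
  rw [← psiIntegral_eq_of_le hlam hR (by linarith : R ≤ R + M)]
  calc ‖psiIntegral lam (R + M) t l x‖
      ≤ (R + M) * ((M / (R + M - M)) ^ (x + 1) * (R + M) ^ l * Real.exp (|t| * (R + M))) :=
        norm_psiIntegral_le hlam hR' t l x
    _ = _ := by rw [add_sub_cancel_right, pow_succ]; ring

theorem tendsto_psiIntegral_atTop (hlam : ∀ k, |lam k| ≤ M) {R : ℝ} (hR : M < R) (t : ℝ)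
    (l : ℤ) :
    Tendsto (psiIntegral lam R t l) atTop (𝓝 0) := by
  obtain ⟨C, q, hq0, hq1, hC⟩ := exists_norm_psiIntegral_le_geometric hlam hR t l
  exact squeeze_zero_norm hC
    (by simpa using (tendsto_pow_atTop_nhds_zero_of_lt_one hq0 hq1).const_mul C)

theorem inv_mul_psiIntegrand_succ {x : ℕ} {w : ℂ} (hw : w ≠ 0)
    (hlam : (lam (x + 1) : ℂ) ≠ 0) (hlamw : (lam (x + 1) : ℂ) - w ≠ 0) (t : ℝ) (l : ℤ) :
    (lam (x + 1) : ℂ)⁻¹ * psiIntegrand lam t l (x + 1) w =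
      psiIntegrand lam t (l - 1) (x + 1) w - psiIntegrand lam t (l - 1) x w := by
  rw [psiIntegrand, psiIntegrand, psiIntegrand, psiF_succ]
  rw [show w ^ l = w ^ (l - 1) * w by rw [← zpow_add_one₀ hw, sub_add_cancel]]
  field_simp
  ring

theorem inv_mul_psiIntegral_succ (hlam : ∀ k, |lam k| ≤ M) {R : ℝ} (hR : M < R) {x : ℕ}
    (hx : lam (x + 1) ≠ 0) (t : ℝ) (l : ℤ) :
    (lam (x + 1) : ℂ)⁻¹ * psiIntegral lam R t l (x + 1) =
      psiIntegral lam R t (l - 1) (x + 1) - psiIntegral lam R t (l - 1) x := by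
  have hM : 0 ≤ M := (abs_nonneg _).trans (hlam 0)
  rw [psiIntegral, psiIntegral, psiIntegral, mul_left_comm, ← mul_sub,
    ← circleIntegral.integral_const_mul, ← circleIntegral.integral_sub
      (circleIntegrable_psiIntegrand hlam hR t _ _) (circleIntegrable_psiIntegrand hlam hR t _ _)]
  congr 1
  refine circleIntegral.integral_congr (hM.trans hR.le) fun w hw => ?_
  have hw' : M < ‖w‖ := (mem_sphere_zero_iff_norm.mp hw).symm ▸ hR
  exact inv_mul_psiIntegrand_succ (norm_pos_iff.mp (hM.trans_lt hw')) (by exact_mod_cast hx)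
    (ofReal_sub_ne_zero (hlam _) hw') t l

end Psi

theorem stmt_15_general (lam : ℕ → ℝ) (s M : ℝ) (hs : 0 < s)
    (hlb : ∀ x, s ≤ lam x) (hub : ∀ x, lam x ≤ M)
    (R : ℝ) (hR : M < R) (t : ℝ) (y : ℕ) (l : ℤ) :
    HasSum (fun x : { x : ℕ // y < x } =>
        ((lam x.1 : ℂ))⁻¹ * ((2 * (Real.pi : ℂ) * Complex.I)⁻¹ *
          ∮ w in C(0, R), psiF lam x.1 w * w ^ l * Complex.exp (-(t : ℂ) * w)))
      (-((2 * (Real.pi : ℂ) * Complex.I)⁻¹ *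
          ∮ w in C(0, R), psiF lam y w * w ^ (l - 1) * Complex.exp (-(t : ℂ) * w))) ∧
    Summable (fun x : { x : ℕ // y < x } =>
        ‖((lam x.1 : ℂ))⁻¹ * ((2 * (Real.pi : ℂ) * Complex.I)⁻¹ *
          ∮ w in C(0, R), psiF lam x.1 w * w ^ l * Complex.exp (-(t : ℂ) * w))‖) := by
  have hpos (k : ℕ) : 0 < lam k := hs.trans_le (hlb k)
  have hlam (k : ℕ) : |lam k| ≤ M := (abs_of_pos (hpos k)).le.trans (hub k)
  obtain ⟨C, q, hq0, hq1, hC⟩ := exists_norm_psiIntegral_le_geometric hlam hR t l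
  have hsummable : Summable fun x => ‖(lam x : ℂ)⁻¹ * psiIntegral lam R t l x‖ := by
    refine .of_nonneg_of_le (fun _ => norm_nonneg _) (fun x => ?_)
      ((summable_geometric_of_lt_one hq0 hq1).mul_left (s⁻¹ * C))
    rw [norm_mul, norm_inv, Complex.norm_real, Real.norm_eq_abs, abs_of_pos (hpos x), mul_assoc]
    exact mul_le_mul (inv_anti₀ hs (hlb x)) (hC x) (norm_nonneg _) (inv_nonneg.mpr hs.le)
  exact ⟨hasSum_subtype_gt_of_eq_sub y
    (fun n _ => inv_mul_psiIntegral_succ hlam hR (hpos _).ne' t l) hsummable.of_norm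
    (tendsto_psiIntegral_atTop hlam hR t (l - 1)), hsummable.subtype _⟩

/-- for every t ≥ 0, y ∈ ℤ₊ and integer l,
Σ_{x>y} λ(x)⁻¹ (1/2πi) ∮ ψ_x(w) w^l e^{−tw} dw = −(1/2πi) ∮ ψ_y(w) w^{l−1} e^{−tw} dw,
the series converging (absolutely, which in ℂ is equivalent to summability). -/
theorem stmt_15 (lam : ℕ → ℝ) (s M : ℝ) (hs : 0 < s)
    (hlb : ∀ x, s ≤ lam x) (hub : ∀ x, lam x ≤ M)
    (R : ℝ) (hR : M < R) (t : ℝ) (ht : 0 ≤ t) (y : ℕ) (l : ℤ) :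
    HasSum (fun x : { x : ℕ // y < x } =>
        ((lam x.1 : ℂ))⁻¹ * ((2 * (Real.pi : ℂ) * Complex.I)⁻¹ *
          ∮ w in C(0, R), psiF lam x.1 w * w ^ l * Complex.exp (-(t : ℂ) * w)))
      (-((2 * (Real.pi : ℂ) * Complex.I)⁻¹ *
          ∮ w in C(0, R), psiF lam y w * w ^ (l - 1) * Complex.exp (-(t : ℂ) * w))) ∧
    Summable (fun x : { x : ℕ // y < x } =>
        ‖((lam x.1 : ℂ))⁻¹ * ((2 * (Real.pi : ℂ) * Complex.I)⁻¹ *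
          ∮ w in C(0, R), psiF lam x.1 w * w ^ l * Complex.exp (-(t : ℂ) * w))‖) :=
  stmt_15_general lam s M hs hlb hub R hR t y l
end
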